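/- arXiv:1211.0419 — 5 statements merged into one kernel-verified Lean document; each statement's English description precedes it below -/
import Mathlib

section
/- Let Y be a partially ordered topological vector space ordered by a convex cone C with nonempty interior, Int C ≠ Y. For a nonempty set A ⊆ Y whose upper closure Cl₊A = cl(A + C) satisfies ∅ ≠ Cl₊A ≠ Y, the infimal set satisfies Inf A = { y ∈ Y : y ∉ A + Int C and {y} + Int C ⊆ A + Int C }. -/
/-!
Write `D = interior C` and `B = Cl₊A`. Since `D` is open, `cl (A + C) + D = A + C + D`, and
`C + D ⊆ D` for a convex cone, so `B + D = A + D`. A point `y` is weakly minimal in `B` exactly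
when `y ∉ B + D`, and, as `B` is closed, `B + D ⊆ B` and `0 ∈ cl D`, it lies in `B` exactly when
`{y} + D ⊆ B + D`.
-/

open Set Pointwise

variable {Y : Type*} [AddCommGroup Y] [Module ℝ Y] [TopologicalSpace Y]
  [IsTopologicalAddGroup Y] [ContinuousSMul ℝ Y]

/-- Upper closure of a set with respect to the cone `C`. -/
def upClo (C A : Set Y) : Set Y := closure (A + C)

/-- Weakly minimal elements of `A` with respect to the cone `C`. -/
def wMinSet (C A : Set Y) : Set Y := {y ∈ A | ({y} - interior C) ∩ A = ∅}

/-- Infimal set of `A` with respect to the cone `C`. -/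
def infSet (C A : Set Y) : Set Y := wMinSet C (upClo C A)

theorem Set.singleton_sub_inter_eq_empty_iff {G : Type*} [AddGroup G] {y : G} {B D : Set G} :
    ({y} - D) ∩ B = ∅ ↔ y ∉ B + D := by
  rw [← not_nonempty_iff_eq_empty, not_iff_not]
  constructor
  · rintro ⟨_, ⟨_, rfl, d, hd, rfl⟩, hb⟩
    exact ⟨_, hb, d, hd, sub_add_cancel _ d⟩
  · rintro ⟨b, hb, d, hd, rfl⟩
    exact ⟨b, ⟨_, rfl, d, hd, add_sub_cancel_right b d⟩, hb⟩

theorem subset_closure_of_add_subset {G : Type*} [AddGroup G] [TopologicalSpace G]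
    [ContinuousAdd G] {S D T : Set G} (h0 : (0 : G) ∈ closure D) (h : S + D ⊆ T) :
    S ⊆ closure T := by
  intro s hs
  have hs' : s ∈ closure (s +ᵥ D) := by
    rw [closure_vadd]
    exact ⟨0, h0, add_zero s⟩
  refine closure_mono (subset_trans ?_ h) hs'
  rintro _ ⟨d, hd, rfl⟩
  exact add_mem_add hs hd

theorem Convex.add_self_subset_of_smul_subset {𝕜 E : Type*} [Field 𝕜] [LinearOrder 𝕜]
    [IsStrictOrderedRing 𝕜] [AddCommGroup E] [Module 𝕜 E] {C : Set E} (hC : Convex 𝕜 C)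
    (hCone : ∀ r : 𝕜, 0 < r → r • C ⊆ C) : C + C ⊆ C := by
  have h := hC.add_smul zero_le_one zero_le_one
  rw [one_smul] at h
  exact h ▸ hCone _ (by norm_num)

theorem smul_interior_subset {E : Type*} [AddCommGroup E] [Module ℝ E] [TopologicalSpace E]
    [ContinuousConstSMul ℝ E] {C : Set E} (hCone : ∀ r : ℝ, 0 < r → r • C ⊆ C) {r : ℝ}
    (hr : 0 < r) : r • interior C ⊆ interior C := by
  rw [← interior_smul₀ hr.ne']
  exact interior_mono (hCone r hr)

theorem zero_mem_closure_interior {E : Type*} [AddCommGroup E] [Module ℝ E] [TopologicalSpace E]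
    [ContinuousSMul ℝ E] {C : Set E} (hCone : ∀ r : ℝ, 0 < r → r • C ⊆ C)
    (hInt : (interior C).Nonempty) : (0 : E) ∈ closure (interior C) := by
  obtain ⟨c, hc⟩ := hInt
  have hlim : Filter.Tendsto (fun t : ℝ => t • c) (nhdsWithin 0 (Ioi 0)) (nhds 0) := by
    have hcont : Continuous fun t : ℝ => t • c := continuous_id.smul continuous_const
    simpa using (hcont.tendsto 0).mono_left nhdsWithin_le_nhds
  exact mem_closure_of_tendsto hlim (eventually_mem_nhdsWithin.mono fun t ht =>
    smul_interior_subset hCone ht (smul_mem_smul_set hc))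

theorem isClosed_upClo {E : Type*} [AddCommGroup E] [TopologicalSpace E] (C A : Set E) :
    IsClosed (upClo C A) :=
  isClosed_closure

section

variable {E : Type*} [AddCommGroup E] [TopologicalSpace E] [IsTopologicalAddGroup E]
  {C A B : Set E}

theorem add_interior_subset_interior (hCC : C + C ⊆ C) : C + interior C ⊆ interior C :=
  interior_maximal ((add_subset_add_left interior_subset).trans hCC) isOpen_interior.add_left

theorem upClo_add_interior_eq (hCC : C + C ⊆ C) (h0 : (0 : E) ∈ closure (interior C)) :
    upClo C A + interior C = A + interior C := by
  refine subset_antisymm ?_ (add_subset_add_right ?_)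
  · rw [upClo, isOpen_interior.closure_add, add_assoc]
    exact add_subset_add_left (add_interior_subset_interior hCC)
  · exact subset_closure_of_add_subset h0 (add_subset_add_left interior_subset)

theorem upClo_add_interior_subset (hCC : C + C ⊆ C) (h0 : (0 : E) ∈ closure (interior C)) :
    upClo C A + interior C ⊆ upClo C A := by
  rw [upClo_add_interior_eq hCC h0]
  exact (add_subset_add_left interior_subset).trans subset_closure

theorem wMinSet_eq_of_isClosed (hB : IsClosed B) (hBC : B + interior C ⊆ B)
    (h0 : (0 : E) ∈ closure (interior C)) :
    wMinSet C B = {y | y ∉ B + interior C ∧ {y} + interior C ⊆ B + interior C} := by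
  ext y
  have hyB : y ∈ B ↔ {y} + interior C ⊆ B + interior C :=
    ⟨fun hy => add_subset_add_right (singleton_subset_iff.mpr hy), fun hy =>
      hB.closure_subset (subset_closure_of_add_subset h0 (hy.trans hBC) rfl)⟩
  simp only [wMinSet, mem_ofPred_eq, singleton_sub_inter_eq_empty_iff, hyB, and_comm]

end

theorem stmt_0_general (C A : Set Y) (hC : Convex ℝ C)
    (hCone : ∀ r : ℝ, 0 < r → r • C ⊆ C)
    (hInt : (interior C).Nonempty) :
    infSet C A = {y : Y | y ∉ A + interior C ∧ {y} + interior C ⊆ A + interior C} := by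
  have hCC := hC.add_self_subset_of_smul_subset hCone
  have h0 := zero_mem_closure_interior hCone hInt
  rw [infSet, wMinSet_eq_of_isClosed (isClosed_upClo C A) (upClo_add_interior_subset hCC h0) h0,
    upClo_add_interior_eq hCC h0]

theorem stmt_0 (C A : Set Y) (hC : Convex ℝ C)
    (hCone : ∀ r : ℝ, 0 < r → r • C ⊆ C)
    (hInt : (interior C).Nonempty) (hIntNe : interior C ≠ univ)
    (hA : A.Nonempty) (h1 : (upClo C A).Nonempty) (h2 : upClo C A ≠ univ) :
    infSet C A = {y : Y | y ∉ A + interior C ∧ {y} + interior C ⊆ A + interior C} :=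
  stmt_0_general C A hC hCone hInt
end

section
/- Let A, B ⊆ Y with ∅ ≠ Cl₊A ≠ Y and ∅ ≠ Cl₊B ≠ Y. Then A + Int C = B + Int C if and only if Inf A = Inf B. -/
open Set Pointwise

variable {Y : Type*} [AddCommGroup Y] [Module ℝ Y] [TopologicalSpace Y]
  [IsTopologicalAddGroup Y] [ContinuousSMul ℝ Y]

/-!
Both `A + int C` and `Inf A` are determined by `Cl₊A`: on the one hand `Cl₊A = cl (A + int C)`,
on the other hand `A + int C = Inf A + int C`. For the latter, given `y ∈ Cl₊A` and `c ∈ int C`,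
follow the ray `y - t c` as far as it stays in the closed set `Cl₊A`; since `Cl₊A + int C ⊆ Cl₊A`
and `Cl₊A ≠ Y`, the ray leaves `Cl₊A` for large `t`. Its last point `w` in `Cl₊A` is weakly
minimal: if `w - d ∈ Cl₊A` with `d ∈ int C`, then the neighbourhood `w - d + int C` of `w` lies in
`Cl₊A`, so the ray would stay in `Cl₊A` a little longer.
-/

open Filter Topology

section Cone

variable {C : Set Y}

omit [TopologicalSpace Y] [IsTopologicalAddGroup Y] [ContinuousSMul ℝ Y] in
lemma Convex.add_self_subset_of_smul_subset_s1 (hC : Convex ℝ C)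
    (hCone : ∀ r : ℝ, 0 < r → r • C ⊆ C) : C + C ⊆ C := by
  rintro _ ⟨c₁, h₁, c₂, h₂, rfl⟩
  have hmid : (1 / 2 : ℝ) • c₁ + (1 / 2 : ℝ) • c₂ ∈ C :=
    hC h₁ h₂ (by norm_num) (by norm_num) (by norm_num)
  exact hCone 2 two_pos ⟨_, hmid, by module⟩

omit [IsTopologicalAddGroup Y] in
lemma smul_interior_subset_of_smul_subset (hCone : ∀ r : ℝ, 0 < r → r • C ⊆ C) {r : ℝ}
    (hr : 0 < r) : r • interior C ⊆ interior C := by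
  rw [← interior_smul₀ hr.ne']
  exact interior_mono (hCone r hr)

lemma Convex.add_interior_eq_interior (hC : Convex ℝ C)
    (hCone : ∀ r : ℝ, 0 < r → r • C ⊆ C) : C + interior C = interior C := by
  refine (interior_maximal ?_ isOpen_interior.add_left).antisymm ?_
  · exact (add_subset_add_left interior_subset).trans (hC.add_self_subset_of_smul_subset_s1 hCone)
  · intro e he
    have hhalf : (1 / 2 : ℝ) • e ∈ interior C :=
      smul_interior_subset_of_smul_subset hCone one_half_pos (smul_mem_smul_set he)
    exact ⟨_, interior_subset hhalf, _, hhalf, by module⟩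

lemma upClo_eq_closure_add_interior (hC : Convex ℝ C) (hCone : ∀ r : ℝ, 0 < r → r • C ⊆ C)
    (hInt : (interior C).Nonempty) (A : Set Y) : upClo C A = closure (A + interior C) := by
  refine closure_minimal ?_ isClosed_closure |>.antisymm
    (closure_mono (add_subset_add_left interior_subset))
  obtain ⟨e, he⟩ := hInt
  rintro _ ⟨a, ha, c, hc, rfl⟩
  have hlim : Tendsto (fun t : ℝ => a + c + t • e) (𝓝[>] 0) (𝓝 (a + c)) := by
    refine (Continuous.tendsto' ?_ 0 _ (by simp)).mono_left nhdsWithin_le_nhds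
    fun_prop
  refine mem_closure_of_tendsto hlim (eventually_mem_nhdsWithin.mono fun t (ht : 0 < t) => ?_)
  have hte : t • e ∈ interior C :=
    smul_interior_subset_of_smul_subset hCone ht (smul_mem_smul_set he)
  rw [← hC.add_interior_eq_interior hCone]
  exact ⟨a, ha, c + t • e, Set.add_mem_add hc hte, (add_assoc _ _ _).symm⟩

lemma upClo_add_interior (hC : Convex ℝ C) (hCone : ∀ r : ℝ, 0 < r → r • C ⊆ C)
    (A : Set Y) : upClo C A + interior C = A + interior C := by
  rw [upClo, isOpen_interior.closure_add, add_assoc, hC.add_interior_eq_interior hCone]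

end Cone

section WeaklyMinimal

variable {C S : Set Y}

lemma eventually_sub_smul_notMem (hCone : ∀ r : ℝ, 0 < r → r • C ⊆ C)
    (hSadd : S + interior C ⊆ S) (hS : S ≠ univ) (y : Y) {c : Y} (hc : c ∈ interior C) :
    ∀ᶠ t : ℝ in atTop, y - t • c ∉ S := by
  obtain ⟨z, hz⟩ := (ne_univ_iff_exists_notMem S).1 hS
  have hdir : ∀ᶠ t : ℝ in atTop, c + t⁻¹ • (z - y) ∈ interior C := by
    have hlim : Tendsto (fun t : ℝ => c + t⁻¹ • (z - y)) atTop (𝓝 c) := by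
      simpa using tendsto_const_nhds.add ((tendsto_inv_atTop_zero (𝕜 := ℝ)).smul_const (z - y))
    exact hlim.eventually (isOpen_interior.mem_nhds hc)
  filter_upwards [hdir, eventually_gt_atTop 0] with t ht htpos hyt
  refine hz (hSadd ⟨_, hyt, _, smul_interior_subset_of_smul_subset hCone htpos
    (smul_mem_smul_set ht), ?_⟩)
  show y - t • c + t • (c + t⁻¹ • (z - y)) = z
  rw [smul_add, smul_smul, mul_inv_cancel₀ htpos.ne', one_smul]
  abel

lemma exists_sub_smul_mem_wMinSet (hCone : ∀ r : ℝ, 0 < r → r • C ⊆ C) (hS : IsClosed S)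
    (hSadd : S + interior C ⊆ S) (hSne : S ≠ univ) {y : Y} (hy : y ∈ S) {c : Y}
    (hc : c ∈ interior C) : ∃ t ≥ (0 : ℝ), y - t • c ∈ wMinSet C S := by
  set T : Set ℝ := {t | 0 ≤ t ∧ y - t • c ∈ S}
  have hray : Continuous fun t : ℝ => y - t • c := by fun_prop
  have hTbdd : BddAbove T := by
    obtain ⟨N, hN⟩ := eventually_atTop.1 (eventually_sub_smul_notMem hCone hSadd hSne y hc)
    exact ⟨N, fun t ht => le_of_not_ge fun hNt => hN t hNt ht.2⟩
  obtain ⟨ht₀, ht₀S⟩ : sSup T ∈ T :=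
    (isClosed_Ici.inter (hS.preimage hray)).csSup_mem ⟨0, mem_Ici.2 le_rfl, by simpa using hy⟩ hTbdd
  refine ⟨sSup T, ht₀, ht₀S, eq_empty_iff_forall_notMem.2 ?_⟩
  rintro _ ⟨⟨_, rfl, d, hd, rfl⟩, hw⟩
  have hnhds : {y - sSup T • c - d} + interior C ∈ 𝓝 (y - sSup T • c) :=
    isOpen_interior.add_left.mem_nhds ⟨_, rfl, d, hd, sub_add_cancel _ _⟩
  obtain ⟨t, htw, hlt : sSup T < t⟩ :=
    (((hray.tendsto _).eventually hnhds).filter_mono nhdsWithin_le_nhds |>.and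
      (eventually_mem_nhdsWithin (a := sSup T) (s := Ioi (sSup T)))).exists
  have htT : t ∈ T :=
    ⟨ht₀.trans hlt.le, hSadd (add_subset_add_right (singleton_subset_iff.2 hw) htw)⟩
  exact (le_csSup hTbdd htT).not_gt hlt

lemma add_interior_subset_wMinSet_add_interior (hCone : ∀ r : ℝ, 0 < r → r • C ⊆ C)
    (hS : IsClosed S) (hSadd : S + interior C ⊆ S) (hSne : S ≠ univ) :
    S + interior C ⊆ wMinSet C S + interior C := by
  rintro _ ⟨y, hy, c, hc, rfl⟩
  obtain ⟨t, ht, hmin⟩ := exists_sub_smul_mem_wMinSet hCone hS hSadd hSne hy hc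
  exact ⟨_, hmin, (1 + t) • c, smul_interior_subset_of_smul_subset hCone (by positivity)
    (smul_mem_smul_set hc), by module⟩

end WeaklyMinimal

lemma infSet_add_interior {C : Set Y} (hC : Convex ℝ C) (hCone : ∀ r : ℝ, 0 < r → r • C ⊆ C)
    {A : Set Y} (hA : upClo C A ≠ univ) : infSet C A + interior C = A + interior C := by
  have hadd : upClo C A + interior C ⊆ upClo C A := by
    rw [upClo_add_interior hC hCone]
    exact (add_subset_add_left interior_subset).trans subset_closure
  rw [← upClo_add_interior hC hCone A]
  exact (add_subset_add_right fun y hy => hy.1).antisymm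
    (add_interior_subset_wMinSet_add_interior hCone isClosed_closure hadd hA)

theorem stmt_1_general (C A B : Set Y) (hC : Convex ℝ C)
    (hCone : ∀ r : ℝ, 0 < r → r • C ⊆ C)
    (hInt : (interior C).Nonempty)
    (hA2 : upClo C A ≠ univ)
    (hB2 : upClo C B ≠ univ) :
    A + interior C = B + interior C ↔ infSet C A = infSet C B := by
  constructor
  · intro h
    simp only [infSet, upClo_eq_closure_add_interior hC hCone hInt, h]
  · intro h
    rw [← infSet_add_interior hC hCone hA2, ← infSet_add_interior hC hCone hB2, h]

theorem stmt_1 (C A B : Set Y) (hC : Convex ℝ C)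
    (hCone : ∀ r : ℝ, 0 < r → r • C ⊆ C)
    (hInt : (interior C).Nonempty) (hIntNe : interior C ≠ univ)
    (hA1 : (upClo C A).Nonempty) (hA2 : upClo C A ≠ univ)
    (hB1 : (upClo C B).Nonempty) (hB2 : upClo C B ≠ univ) :
    A + interior C = B + interior C ↔ infSet C A = infSet C B :=
  stmt_1_general C A B hC hCone hInt hA2 hB2
end

section
/- Let A ⊆ Y with ∅ ≠ Cl₊A ≠ Y. Then the three sets Inf A, Inf A − Int C, and Inf A + Int C are pairwise disjoint. -/
/-!
All three disjointness claims reduce to one fact: if `y` is weakly minimal in `B` and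
`c ∈ int C`, then `y - c ∉ B`. The third one also needs `int C + int C ⊆ int C`, which
holds because a convex cone is closed under addition.
-/

open Set Pointwise

variable {Y : Type*} [AddCommGroup Y] [Module ℝ Y] [TopologicalSpace Y]
  [IsTopologicalAddGroup Y] [ContinuousSMul ℝ Y]

theorem Convex.add_subset_of_smul_subset {E : Type*} [AddCommGroup E] [Module ℝ E] {C : Set E}
    (hC : Convex ℝ C) (hCone : ∀ r : ℝ, 0 < r → r • C ⊆ C) : C + C ⊆ C := by
  rintro _ ⟨a, ha, b, hb, rfl⟩
  obtain ⟨r, hr, hab⟩ := (ConvexCone.mem_hull_of_convex hC).1 <|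
    (ConvexCone.hull ℝ C).add_mem (ConvexCone.subset_hull ha) (ConvexCone.subset_hull hb)
  exact hCone r hr hab

section WeaklyMinimal

variable {E : Type*} [AddCommGroup E] [TopologicalSpace E] {C B : Set E}

theorem wMinSet_subset : wMinSet C B ⊆ B := sep_subset _ _

theorem sub_notMem_of_mem_wMinSet {y c : E} (hy : y ∈ wMinSet C B) (hc : c ∈ interior C) :
    y - c ∉ B := fun hB =>
  eq_empty_iff_forall_notMem.1 hy.2 (y - c) ⟨sub_mem_sub (mem_singleton y) hc, hB⟩

theorem disjoint_wMinSet_sub_interior : Disjoint B (wMinSet C B - interior C) := by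
  rw [disjoint_left]
  rintro _ hB ⟨y, hy, c, hc, rfl⟩
  exact sub_notMem_of_mem_wMinSet hy hc hB

theorem disjoint_wMinSet_add_interior : Disjoint (wMinSet C B) (B + interior C) := by
  rw [disjoint_left]
  rintro x hx ⟨b, hb, c, hc, rfl⟩
  exact sub_notMem_of_mem_wMinSet hx hc (by rwa [add_sub_cancel_right])

theorem disjoint_wMinSet_sub_interior_add_interior
    (hC : interior C + interior C ⊆ interior C) :
    Disjoint (wMinSet C B - interior C) (B + interior C) := by
  rw [disjoint_left]
  rintro _ ⟨y, hy, c, hc, rfl⟩ ⟨b, hb, c', hc', hbc⟩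
  have hb_eq : b = y - (c + c') := by
    rw [sub_add_eq_sub_sub]; exact eq_sub_of_add_eq hbc
  exact sub_notMem_of_mem_wMinSet hy (hC (add_mem_add hc hc')) (hb_eq ▸ hb)

end WeaklyMinimal

theorem stmt_4_general (C A : Set Y) (hC : Convex ℝ C)
    (hCone : ∀ r : ℝ, 0 < r → r • C ⊆ C) :
    Disjoint (infSet C A) (infSet C A - interior C) ∧
    Disjoint (infSet C A) (infSet C A + interior C) ∧
    Disjoint (infSet C A - interior C) (infSet C A + interior C) := by
  have hIntAdd : interior C + interior C ⊆ interior C :=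
    subset_interior_add.trans (interior_mono (hC.add_subset_of_smul_subset hCone))
  exact ⟨disjoint_wMinSet_sub_interior.mono_left wMinSet_subset,
    disjoint_wMinSet_add_interior.mono_right (add_subset_add_right wMinSet_subset),
    (disjoint_wMinSet_sub_interior_add_interior hIntAdd).mono_right
      (add_subset_add_right wMinSet_subset)⟩

theorem stmt_4 (C A : Set Y) (hC : Convex ℝ C)
    (hCone : ∀ r : ℝ, 0 < r → r • C ⊆ C)
    (hInt : (interior C).Nonempty) (hIntNe : interior C ≠ univ)
    (h1 : (upClo C A).Nonempty) (h2 : upClo C A ≠ univ) :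
    Disjoint (infSet C A) (infSet C A - interior C) ∧
    Disjoint (infSet C A) (infSet C A + interior C) ∧
    Disjoint (infSet C A - interior C) (infSet C A + interior C) :=
  stmt_4_general C A hC hCone
end

section
/- Let A ⊆ Y with ∅ ≠ Cl₊A ≠ Y and α > 0 a real number. Then α · Inf A = Inf(α · A). -/
/-! A cone is invariant under scaling by `α > 0`, and scaling by `α ≠ 0` is a linear
homeomorphism, so it commutes with sums, closures, interiors, translates and intersections;
hence it commutes with each step of the construction of `Inf`. -/

open Set Pointwise

variable {Y : Type*} [AddCommGroup Y] [Module ℝ Y] [TopologicalSpace Y]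
  [IsTopologicalAddGroup Y] [ContinuousSMul ℝ Y]

section Scaling

variable {E : Type*} [AddCommGroup E] [Module ℝ E]

lemma smul_set_eq_self_of_cone {C : Set E}
    (hCone : ∀ r : ℝ, 0 < r → r • C ⊆ C) {α : ℝ} (hα : 0 < α) : α • C = C := by
  refine (hCone α hα).antisymm fun c hc => ⟨α⁻¹ • c, hCone α⁻¹ (inv_pos.2 hα) ⟨c, hc, rfl⟩, ?_⟩
  simp [smul_smul, hα.ne']

variable [TopologicalSpace E] [ContinuousConstSMul ℝ E]

lemma smul_upClo {C : Set E} (A : Set E) {α : ℝ} (hα : α ≠ 0) (hC : α • C = C) :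
    α • upClo C A = upClo C (α • A) := by
  rw [upClo, upClo, ← closure_smul₀' hα, smul_add, hC]

lemma smul_wMinSet {C : Set E} (A : Set E) {α : ℝ} (hα : α ≠ 0) (hC : α • C = C) :
    α • wMinSet C A = wMinSet C (α • A) := by
  have hInt : α • interior C = interior C := by rw [← interior_smul₀ hα, hC]
  have hTranslate (x : E) : {α • x} - interior C = α • ({x} - interior C) := by
    rw [sub_eq_add_neg, sub_eq_add_neg, smul_add, smul_set_singleton, smul_set_neg, hInt]
  ext y
  constructor
  · rintro ⟨x, ⟨hxA, hx⟩, rfl⟩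
    refine ⟨smul_mem_smul_set hxA, ?_⟩
    rw [hTranslate, ← smul_set_inter₀ hα, hx, smul_set_empty]
  · rintro ⟨⟨x, hxA, rfl⟩, hy⟩
    rw [hTranslate, ← smul_set_inter₀ hα, smul_set_eq_empty] at hy
    exact ⟨x, ⟨hxA, hy⟩, rfl⟩

lemma smul_infSet {C : Set E} (A : Set E) {α : ℝ} (hα : α ≠ 0) (hC : α • C = C) :
    α • infSet C A = infSet C (α • A) := by
  rw [infSet, infSet, smul_wMinSet _ hα hC, smul_upClo A hα hC]

end Scaling

theorem stmt_7_general (C A : Set Y)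
    (hCone : ∀ r : ℝ, 0 < r → r • C ⊆ C)
    (α : ℝ) (hα : 0 < α) :
    α • infSet C A = infSet C (α • A) :=
  smul_infSet A hα.ne' (smul_set_eq_self_of_cone hCone hα)

theorem stmt_7 (C A : Set Y) (hC : Convex ℝ C)
    (hCone : ∀ r : ℝ, 0 < r → r • C ⊆ C)
    (hInt : (interior C).Nonempty) (hIntNe : interior C ≠ univ)
    (h1 : (upClo C A).Nonempty) (h2 : upClo C A ≠ univ)
    (α : ℝ) (hα : 0 < α) :
    α • infSet C A = infSet C (α • A) :=
  stmt_7_general C A hCone α hα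
end

section
/- Let A ⊆ Y with ∅ ≠ Cl₊A ≠ Y. Then Inf(Inf A) = Inf A, Cl₊(Cl₊A) = Cl₊A, Inf(Cl₊A) = Inf A, and Cl₊(Inf A) = Cl₊A. -/
open Set Pointwise

variable {Y : Type*} [AddCommGroup Y] [Module ℝ Y] [TopologicalSpace Y]
  [IsTopologicalAddGroup Y] [ContinuousSMul ℝ Y]

/-!
Write `B := Cl₊A`; it is closed and `B + C ⊆ B`, which gives `Cl₊B = B` and `Cl₊(Inf A) ⊆ B`.
For the converse inclusion fix `e ∈ Int C` and `b ∈ B`, and push `b` down along `-e`: since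
`B ≠ Y`, the set of `t` with `b - t • e ∈ B` is bounded above, and at its supremum `t₀` the point
`b - t₀ • e` is weakly minimal in `B`, because moving from it by any `-d`, `d ∈ Int C`, would
allow pushing a little further. Hence `b ∈ Inf A + C` (or `b ∈ Inf A` when `t₀ = 0`).
The two remaining identities follow by rewriting with the first two.
-/

open Filter Topology

lemma add_mem_of_convex_of_smul_subset {E : Type*} [AddCommGroup E] [Module ℝ E] {C : Set E}
    (hC : Convex ℝ C) (hCone : ∀ r : ℝ, 0 < r → r • C ⊆ C)
    {x y : E} (hx : x ∈ C) (hy : y ∈ C) : x + y ∈ C := by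
  have hmid : (1 / 2 : ℝ) • x + (1 / 2 : ℝ) • y ∈ C :=
    hC hx hy (by norm_num) (by norm_num) (by norm_num)
  have h := hCone 2 two_pos (smul_mem_smul_set hmid)
  rwa [smul_add, smul_smul, smul_smul, show (2 : ℝ) * (1 / 2) = 1 by norm_num, one_smul,
    one_smul] at h

lemma eventually_nhdsGT_sub_smul_mem {U : Set Y} (hU : IsOpen U) {d : Y} (hd : d ∈ U) (e : Y) :
    ∀ᶠ s in 𝓝[>] (0 : ℝ), d - s • e ∈ U := by
  have hcont : Continuous fun s : ℝ => d - s • e := by fun_prop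
  have hlim : Tendsto (fun s : ℝ => d - s • e) (𝓝[>] 0) (𝓝 d) := by
    simpa using (hcont.tendsto 0).mono_left nhdsWithin_le_nhds
  exact hlim.eventually (hU.mem_nhds hd)

lemma subset_closure_add_of_smul_subset {C : Set Y} (hCone : ∀ r : ℝ, 0 < r → r • C ⊆ C)
    (hne : C.Nonempty) (S : Set Y) : S ⊆ closure (S + C) := by
  obtain ⟨e, he⟩ := hne
  refine fun x hx ↦ mem_closure_iff.2 fun U hU hxU ↦ ?_
  obtain ⟨s, hsU, hs⟩ :=
    ((eventually_nhdsGT_sub_smul_mem hU hxU (-e)).and self_mem_nhdsWithin).exists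
  rw [smul_neg, sub_neg_eq_add] at hsU
  exact ⟨_, hsU, add_mem_add hx (hCone s hs (smul_mem_smul_set he))⟩

lemma closure_add_subset_closure {G : Type*} [AddSemigroup G] [TopologicalSpace G]
    [ContinuousAdd G] {C : Set G} (hadd : ∀ x ∈ C, ∀ y ∈ C, x + y ∈ C) (S : Set G) :
    closure (S + C) + C ⊆ closure (S + C) := by
  rintro _ ⟨x, hx, c, hc, rfl⟩
  refine map_mem_closure (f := (· + c)) (continuous_add_const c) hx ?_
  rintro _ ⟨a, ha, d, hd, rfl⟩
  exact ⟨a, ha, d + c, hadd d hd c hc, (add_assoc a d c).symm⟩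

section UpwardClosed

variable {B C : Set Y}

lemma upClo_eq_self (hCone : ∀ r : ℝ, 0 < r → r • C ⊆ C) (hne : C.Nonempty)
    (hB : IsClosed B) (hBC : B + C ⊆ B) : upClo C B = B :=
  (closure_minimal hBC hB).antisymm (subset_closure_add_of_smul_subset hCone hne B)

lemma bddAbove_setOf_sub_smul_mem (hCone : ∀ r : ℝ, 0 < r → r • C ⊆ C) (hBC : B + C ⊆ B)
    (hB : B ≠ univ) {e : Y} (he : e ∈ interior C) (b : Y) :
    BddAbove {t : ℝ | b - t • e ∈ B} := by
  refine not_not.1 fun hunbdd ↦ hB (eq_univ_of_forall fun y ↦ ?_)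
  have hev : ∀ᶠ t : ℝ in atTop, e - t⁻¹ • (b - y) ∈ interior C ∧ 0 < t :=
    (tendsto_inv_atTop_nhdsGT_zero.eventually
      (eventually_nhdsGT_sub_smul_mem isOpen_interior he (b - y))).and (eventually_gt_atTop 0)
  have hfreq : ∃ᶠ t in atTop, b - t • e ∈ B := frequently_atTop.2 fun a ↦
    (not_bddAbove_iff.1 hunbdd a).imp fun _ ht ↦ ⟨ht.2.le, ht.1⟩
  obtain ⟨t, ⟨hint, htpos⟩, htB⟩ := (hev.and_frequently hfreq).exists
  -- `y` is `b - t • e` moved up by `t • (e - t⁻¹ • (b - y)) ∈ C`.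
  have hmem : t • (e - t⁻¹ • (b - y)) ∈ C :=
    hCone t htpos (smul_mem_smul_set (interior_subset hint))
  have heq : b - t • e + t • (e - t⁻¹ • (b - y)) = y := by
    rw [smul_sub, smul_smul, mul_inv_cancel₀ htpos.ne', one_smul]
    abel
  exact heq ▸ hBC (add_mem_add htB hmem)

lemma sub_smul_mem_wMinSet (hBC : B + C ⊆ B) {b e : Y} {t₀ : ℝ}
    (ht₀ : IsGreatest {t : ℝ | b - t • e ∈ B} t₀) : b - t₀ • e ∈ wMinSet C B := by
  refine ⟨ht₀.1, eq_empty_iff_forall_notMem.2 ?_⟩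
  rintro _ ⟨⟨_, rfl, d, hd, rfl⟩, hxB⟩
  obtain ⟨s, hds, hs⟩ :=
    ((eventually_nhdsGT_sub_smul_mem isOpen_interior hd e).and self_mem_nhdsWithin).exists
  have hmem : b - (t₀ + s) • e ∈ B := by
    have h := hBC (add_mem_add hxB (interior_subset hds))
    rwa [show b - t₀ • e - d + (d - s • e) = b - (t₀ + s) • e by rw [add_smul]; abel] at h
  linarith [ht₀.2 hmem, show (0 : ℝ) < s from hs]

lemma subset_closure_wMinSet_add (hCone : ∀ r : ℝ, 0 < r → r • C ⊆ C) (hB : IsClosed B)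
    (hBC : B + C ⊆ B) (hBne : B ≠ univ) {e : Y} (he : e ∈ interior C) :
    B ⊆ closure (wMinSet C B + C) := by
  intro b hb
  have hT : IsClosed {t : ℝ | b - t • e ∈ B} := hB.preimage (by fun_prop)
  have hgreatest := hT.isGreatest_csSup ⟨0, by simpa using hb⟩
    (bddAbove_setOf_sub_smul_mem hCone hBC hBne he b)
  have hw := sub_smul_mem_wMinSet hBC hgreatest
  rcases (hgreatest.2 (by simpa using hb : (0 : ℝ) ∈ _)).eq_or_lt with h0 | hpos
  · rw [← h0, zero_smul, sub_zero] at hw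
    exact subset_closure_add_of_smul_subset hCone ⟨e, interior_subset he⟩ _ hw
  · exact subset_closure ⟨_, hw, _, hCone _ hpos (smul_mem_smul_set (interior_subset he)),
      sub_add_cancel b _⟩

end UpwardClosed

theorem stmt_8_general (C A : Set Y) (hC : Convex ℝ C)
    (hCone : ∀ r : ℝ, 0 < r → r • C ⊆ C)
    (hInt : (interior C).Nonempty)
    (h2 : upClo C A ≠ univ) :
    infSet C (infSet C A) = infSet C A ∧
    upClo C (upClo C A) = upClo C A ∧
    infSet C (upClo C A) = infSet C A ∧
    upClo C (infSet C A) = upClo C A := by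
  obtain ⟨e, he⟩ := hInt
  have hadd : ∀ x ∈ C, ∀ y ∈ C, x + y ∈ C := fun x hx y hy ↦
    add_mem_of_convex_of_smul_subset hC hCone hx hy
  have hclosed : IsClosed (upClo C A) := isClosed_closure
  have hupper : upClo C A + C ⊆ upClo C A := closure_add_subset_closure hadd A
  have hupClo : upClo C (upClo C A) = upClo C A :=
    upClo_eq_self hCone ⟨e, interior_subset he⟩ hclosed hupper
  have hinfSet : upClo C (infSet C A) = upClo C A :=
    (closure_minimal ((add_subset_add_right (sep_subset _ _)).trans hupper) hclosed).antisymm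
      (subset_closure_wMinSet_add hCone hclosed hupper h2 he)
  exact ⟨congrArg (wMinSet C) hinfSet, hupClo, congrArg (wMinSet C) hupClo, hinfSet⟩

theorem stmt_8 (C A : Set Y) (hC : Convex ℝ C)
    (hCone : ∀ r : ℝ, 0 < r → r • C ⊆ C)
    (hInt : (interior C).Nonempty) (hIntNe : interior C ≠ univ)
    (h1 : (upClo C A).Nonempty) (h2 : upClo C A ≠ univ) :
    infSet C (infSet C A) = infSet C A ∧
    upClo C (upClo C A) = upClo C A ∧
    infSet C (upClo C A) = infSet C A ∧
    upClo C (infSet C A) = upClo C A :=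
  stmt_8_general C A hC hCone hInt h2
end
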